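/- Every well-layered chart (X, δ) admits a solution, and this solution is unique up to equivalence: for any two solutions φ, ψ : X → StExp of (X, δ), SL* ⊢ φ(x) = ψ(x) for all x ∈ X. -/

import Mathlib

/-- A chart over action alphabet `Act` with state space `X`: each state is assigned a
finite set of transitions, either `(a, none)` (i.e. `x →a ✓`) or `(a, some y)` (i.e. `x →a y`). -/
structure Chart (Act X : Type) where
  tr : X → Finset (Act × Option X)

/-- `x →a ✓` in the chart `C`. -/
def Chart.Halts {Act X : Type} (C : Chart Act X) (x : X) : Prop :=
  ∃ a : Act, (a, (none : Option X)) ∈ C.tr x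

/-- `x → y` (for some action) in the chart `C`. -/
def Chart.StepRel {Act X : Type} (C : Chart Act X) (x y : X) : Prop :=
  ∃ a : Act, (a, some y) ∈ C.tr x

/-- `R` is a bisimulation between the charts `C` and `D`. -/
def IsBisim {Act X Y : Type} (C : Chart Act X) (D : Chart Act Y) (R : X → Y → Prop) : Prop :=
  ∀ x y, R x y → ∀ a : Act,
    (((a, (none : Option X)) ∈ C.tr x) ↔ ((a, (none : Option Y)) ∈ D.tr y)) ∧
    (∀ x', (a, some x') ∈ C.tr x → ∃ y', (a, some y') ∈ D.tr y ∧ R x' y') ∧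
    (∀ y', (a, some y') ∈ D.tr y → ∃ x', (a, some x') ∈ C.tr x ∧ R x' y')

/-- States `x` of `C` and `y` of `D` are bisimilar. -/
def Bisimilar {Act X Y : Type} (C : Chart Act X) (D : Chart Act Y) (x : X) (y : Y) : Prop :=
  ∃ R, IsBisim C D R ∧ R x y

/-- A chart homomorphism is a function whose graph is a bisimulation. -/
def IsChartHom {Act X Y : Type} (C : Chart Act X) (D : Chart Act Y) (h : X → Y) : Prop :=
  IsBisim C D (fun x y => h x = y)

/-- 1-free star expressions over the alphabet `Act`. -/
inductive StExp (Act : Type) : Type where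
  | zero : StExp Act
  | act : Act → StExp Act
  | add : StExp Act → StExp Act → StExp Act
  | mul : StExp Act → StExp Act → StExp Act
  | star : StExp Act → StExp Act → StExp Act
deriving DecidableEq

/-- Continuation after a transition of the left operand: `✓` continues as `s`,
and a state `t` continues as `t·s`. -/
def StExp.seqAfter {Act : Type} (s : StExp Act) : Option (StExp Act) → StExp Act
  | none => s
  | some t => t.mul s

/-- The transition function of the syntactic chart, following Antimirov-style rules. -/
def StExp.tr {Act : Type} [DecidableEq Act] : StExp Act → Finset (Act × Option (StExp Act))
  | .zero => ∅
  | .act a => {(a, none)}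
  | .add r s => r.tr ∪ s.tr
  | .mul r s => r.tr.image (fun p => (p.1, some (StExp.seqAfter s p.2)))
  | .star r s =>
      (r.tr.image (fun p => (p.1, some (StExp.seqAfter (StExp.star r s) p.2)))) ∪ s.tr

/-- The syntactic chart `(StExp, δ)`. -/
def synChart (Act : Type) [DecidableEq Act] : Chart Act (StExp Act) := ⟨StExp.tr⟩

/-- Derivability `SL* ⊢ r = s` from Grabmayer and Fokkink's axioms together with
the laws of equational logic. -/
inductive SLEq {Act : Type} : StExp Act → StExp Act → Prop where
  | add_comm (x y : StExp Act) : SLEq (x.add y) (y.add x)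
  | add_assoc (x y z : StExp Act) : SLEq ((x.add y).add z) (x.add (y.add z))
  | add_idem (x : StExp Act) : SLEq (x.add x) x
  | add_zero (x : StExp Act) : SLEq (x.add .zero) x
  | right_distrib (x y z : StExp Act) : SLEq ((x.add y).mul z) ((x.mul z).add (y.mul z))
  | mul_assoc (x y z : StExp Act) : SLEq ((x.mul y).mul z) (x.mul (y.mul z))
  | zero_mul (x : StExp Act) : SLEq (StExp.zero.mul x) .zero
  | star_unfold (x y : StExp Act) : SLEq (x.star y) ((x.mul (x.star y)).add y)
  | fixpoint {x y z : StExp Act} : SLEq x ((y.mul x).add z) → SLEq x (y.star z)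
  | refl (x : StExp Act) : SLEq x x
  | symm {x y : StExp Act} : SLEq x y → SLEq y x
  | trans {x y z : StExp Act} : SLEq x y → SLEq y z → SLEq x z
  | add_congr {x x' y y' : StExp Act} : SLEq x x' → SLEq y y' → SLEq (x.add y) (x'.add y')
  | mul_congr {x x' y y' : StExp Act} : SLEq x x' → SLEq y y' → SLEq (x.mul y) (x'.mul y')
  | star_congr {x x' y y' : StExp Act} : SLEq x x' → SLEq y y' → SLEq (x.star y) (x'.star y')

/-- The expression associated to a single transition under a map `φ`:
`(a, ✓)` yields `a` and `(a, some x)` yields `a·φ(x)`. -/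
def pairExp {Act X : Type} (φ : X → StExp Act) : Act × Option X → StExp Act
  | (a, none) => .act a
  | (a, some x) => (StExp.act a).mul (φ x)

/-- The sum `e1 + ⋯ + en` of a list of expressions (the empty sum is `0`). -/
def listSum {Act : Type} : List (StExp Act) → StExp Act :=
  fun l => l.foldr StExp.add StExp.zero

/-- `φ` is a solution to the chart `C`: for each state `x` with
`δ(x) = {(a1,x1),…,(an,xn),(b1,✓),…,(bm,✓)}` we have
`SL* ⊢ φ(x) = a1·φ(x1) + ⋯ + an·φ(xn) + b1 + ⋯ + bm`. -/
def IsSolution {Act X : Type} (C : Chart Act X) (φ : X → StExp Act) : Prop :=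
  ∀ x : X, SLEq (φ x) (listSum (((C.tr x).toList).map (pairExp φ)))

/-- The body transitions determined by an entry/body labelling whose loop-entry
relation is `E`: the remaining transitions. -/
def Chart.Body {Act X : Type} (C : Chart Act X) (E : X → X → Prop) (x y : X) : Prop :=
  C.StepRel x y ∧ ¬ E x y

/-- `x ↷ y`: there is a chain `x →e x1 →b ⋯ →b xn = y` with `x ∉ {x1, …, xn}`. -/
def Chart.LoopsTo {Act X : Type} (C : Chart Act X) (E : X → X → Prop) (x y : X) : Prop :=
  ∃ x1, E x x1 ∧ x1 ≠ x ∧ Relation.ReflTransGen (fun u v => C.Body E u v ∧ v ≠ x) x1 y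

/-- `E` (together with the complementary body transitions) is a well-layered
entry/body labelling of the chart `C`. -/
def WellLayeredLabelling {Act X : Type} (C : Chart Act X) (E : X → X → Prop) : Prop :=
  (∀ x y, E x y → C.StepRel x y) ∧
  (∀ x, ¬ Relation.TransGen (C.Body E) x x) ∧
  (∀ x y, E x y → Relation.TransGen (C.Body E) y x) ∧
  (∀ x, ¬ Relation.TransGen (C.LoopsTo E) x x) ∧
  (∀ x y, C.LoopsTo E x y → ¬ C.Halts y)

/-- The set of states reachable (by `→*`) from the set `U`. -/
def Chart.Reach {Act X : Type} (C : Chart Act X) (U : Set X) : Set X :=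
  {y | ∃ u ∈ U, Relation.ReflTransGen C.StepRel u y}

/-- A chart is locally finite if every generated subchart `⟨x⟩` is finite. -/
def Chart.LocallyFinite {Act X : Type} (C : Chart Act X) : Prop :=
  ∀ x : X, (C.Reach {x}).Finite

/-- A chart is well-layered if it admits a well-layered entry/body labelling
and is locally finite. -/
def IsWellLayered {Act X : Type} (C : Chart Act X) : Prop :=
  (∃ E : X → X → Prop, WellLayeredLabelling C E) ∧ C.LocallyFinite

/-!
We argue in the quotient `SLExp` of star expressions by provable equality, where a solution is a
system of equations and the fixpoint rule reads `x = y * x + z → x = star y z`.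

Let `Φ` be a solution and `x ↷ y`. Since `y` cannot terminate, the equation of `y` involves,
besides its loop-entry successors, only `Φ x` and states further along the loop of `x`. Assuming
`Φ z = loopExp y z * Φ y` for `y →e z` (induction on `↷`, which is well-founded) and
`Φ w = loopExp x w * Φ x` for those states (induction along body steps), the fixpoint rule gives
`Φ y = loopExp x y * Φ x` for an expression `loopExp x y` determined by the chart alone. The same
substitution turns the equation of any state `x` into `Φ x = entryExp x * Φ x + exitSum Φ x`,
whence `Φ x = star (entryExp x) (exitSum Φ x)`. As `exitSum Φ x` involves `Φ` only at body
successors of `x`, this determines `Φ` by recursion along body steps, and that recursion, read as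
a definition, is a solution.
-/

namespace SLEq

theorem equivalence {Act : Type} : Equivalence (@SLEq Act) := ⟨refl, symm, trans⟩

instance setoid (Act : Type) : Setoid (StExp Act) := ⟨SLEq, equivalence⟩

end SLEq

def SLExp (Act : Type) : Type := Quotient (SLEq.setoid Act)

namespace SLExp

variable {Act : Type}

def mk : StExp Act → SLExp Act := Quotient.mk _

theorem mk_eq_mk {r s : StExp Act} : mk r = mk s ↔ SLEq r s := Quotient.eq

theorem mk_surjective : Function.Surjective (@mk Act) := Quotient.mk_surjective

@[elab_as_elim]
protected theorem ind {P : SLExp Act → Prop} (h : ∀ r, P (mk r)) (x : SLExp Act) : P x :=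
  Quotient.ind h x

def act (a : Act) : SLExp Act := mk (.act a)

instance : Zero (SLExp Act) := ⟨mk .zero⟩

instance : Add (SLExp Act) :=
  ⟨Quotient.map₂ StExp.add fun _ _ h _ _ h' => SLEq.add_congr h h'⟩

instance : Mul (SLExp Act) :=
  ⟨Quotient.map₂ StExp.mul fun _ _ h _ _ h' => SLEq.mul_congr h h'⟩

def star : SLExp Act → SLExp Act → SLExp Act :=
  Quotient.map₂ StExp.star fun _ _ h _ _ h' => SLEq.star_congr h h'

instance : AddCommMonoid (SLExp Act) where
  add_assoc x y z := x.ind fun _ => y.ind fun _ => z.ind fun _ => mk_eq_mk.2 (.add_assoc _ _ _)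
  add_zero x := x.ind fun _ => mk_eq_mk.2 (.add_zero _)
  zero_add x := x.ind fun _ => mk_eq_mk.2 ((SLEq.add_comm _ _).trans (.add_zero _))
  add_comm x y := x.ind fun _ => y.ind fun _ => mk_eq_mk.2 (.add_comm _ _)
  nsmul := nsmulRec

instance : Semigroup (SLExp Act) where
  mul_assoc x y z := x.ind fun _ => y.ind fun _ => z.ind fun _ => mk_eq_mk.2 (.mul_assoc _ _ _)

instance : RightDistribClass (SLExp Act) where
  right_distrib x y z :=
    x.ind fun _ => y.ind fun _ => z.ind fun _ => mk_eq_mk.2 (.right_distrib _ _ _)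

protected theorem zero_mul (x : SLExp Act) : 0 * x = 0 :=
  x.ind fun _ => mk_eq_mk.2 (.zero_mul _)

theorem star_unfold (x y : SLExp Act) : star x y = x * star x y + y :=
  x.ind fun _ => y.ind fun _ => mk_eq_mk.2 (.star_unfold _ _)

theorem eq_star_of_eq {x y z : SLExp Act} : x = y * x + z → x = star y z :=
  x.ind fun _ => y.ind fun _ => z.ind fun _ h => mk_eq_mk.2 (.fixpoint (mk_eq_mk.1 h))

theorem star_mul (x y z : SLExp Act) : star x y * z = star x (y * z) := by
  refine eq_star_of_eq ?_
  conv_lhs => rw [star_unfold]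
  rw [add_mul, mul_assoc]

theorem sum_mul {ι : Type} (s : Finset ι) (f : ι → SLExp Act) (c : SLExp Act) :
    (∑ i ∈ s, f i) * c = ∑ i ∈ s, f i * c := by
  classical
  induction s using Finset.induction_on with
  | empty => exact SLExp.zero_mul c
  | insert i s hi ih => rw [Finset.sum_insert hi, Finset.sum_insert hi, add_mul, ih]

theorem mk_listSum (l : List (StExp Act)) : mk (listSum l) = (l.map mk).sum := by
  induction l with
  | nil => rfl
  | cons r l ih => exact congrArg (mk r + ·) ih

end SLExp

namespace Relation

variable {α : Type}

noncomputable def descendantCount (r : α → α → Prop) (x : α) : ℕ :=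
  {y | TransGen r x y}.ncard

theorem descendantCount_lt {r : α → α → Prop} {x y : α} (hfin : {z | TransGen r x z}.Finite)
    (hy : ¬ TransGen r y y) (h : r x y) : descendantCount r y < descendantCount r x :=
  Set.ncard_lt_ncard
    ⟨fun _ hz => TransGen.head h hz, fun hsub => hy (hsub (TransGen.single h))⟩ hfin

end Relation

open Relation SLExp

namespace Chart

variable {Act X : Type} (C : Chart Act X) (E : X → X → Prop)

noncomputable def succs (x : X) : Finset (Act × X) :=
  (C.tr x).preimage (fun q => (q.1, some q.2)) <| Set.injOn_of_injective fun _ _ h => by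
    simpa [Prod.ext_iff] using h

noncomputable def haltActs (x : X) : Finset Act :=
  (C.tr x).preimage (fun a => (a, none)) <| Set.injOn_of_injective fun _ _ h => by simpa using h

@[simp] theorem mem_succs {x : X} {q : Act × X} : q ∈ C.succs x ↔ (q.1, some q.2) ∈ C.tr x :=
  Finset.mem_preimage

@[simp] theorem mem_haltActs {x : X} {a : Act} : a ∈ C.haltActs x ↔ (a, none) ∈ C.tr x :=
  Finset.mem_preimage

theorem sum_tr {M : Type} [AddCommMonoid M] (x : X) (f : Act × Option X → M) :
    ∑ p ∈ C.tr x, f p =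
      ∑ q ∈ C.succs x, f (q.1, some q.2) + ∑ a ∈ C.haltActs x, f (a, none) := by
  classical
  rw [succs, haltActs, Finset.sum_preimage' (fun q : Act × X => (q.1, some q.2)) _ _ f,
    Finset.sum_preimage' (fun a : Act => (a, none)) _ _ f,
    ← Finset.sum_filter_add_sum_filter_not (C.tr x)
      (· ∈ Set.range fun q : Act × X => (q.1, some q.2))]
  congr 2
  ext ⟨a, _ | z⟩ <;> simp

def Solves (Φ : X → SLExp Act) : Prop :=
  ∀ x, Φ x = ∑ q ∈ C.succs x, act q.1 * Φ q.2 + ∑ a ∈ C.haltActs x, act a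

theorem isSolution_iff_solves (φ : X → StExp Act) :
    IsSolution C φ ↔ C.Solves (SLExp.mk ∘ φ) := by
  refine forall_congr' fun x => ?_
  rw [← mk_eq_mk, mk_listSum, List.map_map, Finset.sum_map_toList, sum_tr]
  rfl

open Classical in
noncomputable def entrySuccs (y : X) : Finset (Act × X) := (C.succs y).filter fun q => E y q.2

open Classical in
noncomputable def bodySuccs (y : X) : Finset (Act × X) := (C.succs y).filter fun q => ¬ E y q.2

theorem mem_entrySuccs {y : X} {q : Act × X} :
    q ∈ C.entrySuccs E y ↔ (q.1, some q.2) ∈ C.tr y ∧ E y q.2 := by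
  classical simp [entrySuccs]

theorem mem_bodySuccs {y : X} {q : Act × X} :
    q ∈ C.bodySuccs E y ↔ (q.1, some q.2) ∈ C.tr y ∧ ¬ E y q.2 := by
  classical simp [bodySuccs]

noncomputable def exitSum (Φ : X → SLExp Act) (y : X) : SLExp Act :=
  ∑ q ∈ C.bodySuccs E y, act q.1 * Φ q.2 + ∑ a ∈ C.haltActs y, act a

theorem solves_iff_entry_add_exit (Φ : X → SLExp Act) :
    C.Solves Φ ↔
      ∀ y, Φ y = ∑ q ∈ C.entrySuccs E y, act q.1 * Φ q.2 + C.exitSum E Φ y := by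
  classical
  refine forall_congr' fun y => ?_
  rw [exitSum, ← add_assoc, entrySuccs, bodySuccs, Finset.sum_filter_add_sum_filter_not]

variable {C E}

theorem body_of_mem_bodySuccs {y : X} {q : Act × X} (hq : q ∈ C.bodySuccs E y) :
    C.Body E y q.2 :=
  let ⟨hs, hE⟩ := (C.mem_bodySuccs E).1 hq
  ⟨⟨q.1, hs⟩, hE⟩

theorem LoopsTo.tail {x y z : X} (h : C.LoopsTo E x y) (hb : C.Body E y z) (hz : z ≠ x) :
    C.LoopsTo E x z :=
  let ⟨x1, hE, hne, hchain⟩ := h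
  ⟨x1, hE, hne, hchain.tail ⟨hb, hz⟩⟩

theorem LocallyFinite.finite_transGen (hLF : C.LocallyFinite) {r : X → X → Prop}
    (hr : ∀ u v, r u v → ReflTransGen C.StepRel u v) (x : X) : {y | TransGen r x y}.Finite := by
  refine (hLF x).subset fun y hy => ⟨x, rfl, ?_⟩
  induction hy with
  | single h => exact hr _ _ h
  | tail _ h ih => exact ih.trans (hr _ _ h)

end Chart

namespace WellLayeredLabelling

open Chart

variable {Act X : Type} {C : Chart Act X} {E : X → X → Prop}

theorem reflTransGen_of_loopsTo (hW : WellLayeredLabelling C E) {x y : X}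
    (h : C.LoopsTo E x y) : ReflTransGen C.StepRel x y :=
  let ⟨_, hE, _, hchain⟩ := h
  .head (hW.1 _ _ hE) (ReflTransGen.mono (fun _ _ hv => hv.1.1) _ _ hchain)

theorem loopsTo_of_mem_entrySuccs (hW : WellLayeredLabelling C E) {y : X} {q : Act × X}
    (hq : q ∈ C.entrySuccs E y) : C.LoopsTo E y q.2 :=
  have hE := ((C.mem_entrySuccs E).1 hq).2
  ⟨q.2, hE, fun hy => hW.2.1 y (by simpa [hy] using hW.2.2.1 _ _ hE), .refl⟩

theorem haltActs_eq_empty (hW : WellLayeredLabelling C E) {x y : X} (h : C.LoopsTo E x y) :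
    C.haltActs y = ∅ :=
  Finset.eq_empty_of_forall_notMem fun a ha => hW.2.2.2.2 x y h ⟨a, (C.mem_haltActs).1 ha⟩

theorem loopRank_lt (hW : WellLayeredLabelling C E) (hLF : C.LocallyFinite) {x y : X}
    (h : C.LoopsTo E x y) : descendantCount (C.LoopsTo E) y < descendantCount (C.LoopsTo E) x :=
  descendantCount_lt (hLF.finite_transGen (fun _ _ => hW.reflTransGen_of_loopsTo) x)
    (hW.2.2.2.1 y) h

theorem bodyRank_lt (hW : WellLayeredLabelling C E) (hLF : C.LocallyFinite) {x y : X}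
    (h : C.Body E x y) : descendantCount (C.Body E) y < descendantCount (C.Body E) x :=
  descendantCount_lt (hLF.finite_transGen (fun _ _ hb => .single hb.1) x) (hW.2.1 y) h

open Classical in
/-- For `x ↷ y`, the behaviour of `y` up to its return to `x`. The guard holds whenever `x ↷ y`;
it is there only to make the recursion terminate. -/
noncomputable def loopExp (hW : WellLayeredLabelling C E) (hLF : C.LocallyFinite) (x y : X) :
    SLExp Act :=
  star
    (if _ : descendantCount (C.LoopsTo E) y < descendantCount (C.LoopsTo E) x then
      ∑ q ∈ (C.entrySuccs E y).attach, act q.1.1 * loopExp hW hLF y q.1.2 else 0)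
    (∑ q ∈ (C.bodySuccs E y).attach,
      if q.1.2 = x then act q.1.1 else act q.1.1 * loopExp hW hLF x q.1.2)
termination_by (descendantCount (C.LoopsTo E) x, descendantCount (C.Body E) y)
decreasing_by
  · exact Prod.Lex.left _ _ (by assumption)
  · exact Prod.Lex.right _ (hW.bodyRank_lt hLF (body_of_mem_bodySuccs q.2))

noncomputable def entryExp (hW : WellLayeredLabelling C E) (hLF : C.LocallyFinite) (y : X) :
    SLExp Act :=
  ∑ q ∈ C.entrySuccs E y, act q.1 * loopExp hW hLF y q.2

open Classical in
theorem loopExp_eq (hW : WellLayeredLabelling C E) (hLF : C.LocallyFinite) {x y : X}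
    (h : descendantCount (C.LoopsTo E) y < descendantCount (C.LoopsTo E) x) :
    loopExp hW hLF x y = star (entryExp hW hLF y)
      (∑ q ∈ C.bodySuccs E y, if q.2 = x then act q.1 else act q.1 * loopExp hW hLF x q.2) := by
  rw [loopExp, dif_pos h, entryExp,
    Finset.sum_attach (C.entrySuccs E y) fun q => act q.1 * loopExp hW hLF y q.2,
    Finset.sum_attach (C.bodySuccs E y)
      fun q => if q.2 = x then act q.1 else act q.1 * loopExp hW hLF x q.2]

noncomputable def solExp (hW : WellLayeredLabelling C E) (hLF : C.LocallyFinite) (y : X) :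
    SLExp Act :=
  star (entryExp hW hLF y)
    (∑ q ∈ (C.bodySuccs E y).attach, act q.1.1 * solExp hW hLF q.1.2 +
      ∑ a ∈ C.haltActs y, act a)
termination_by descendantCount (C.Body E) y
decreasing_by exact hW.bodyRank_lt hLF (body_of_mem_bodySuccs q.2)

theorem solExp_eq (hW : WellLayeredLabelling C E) (hLF : C.LocallyFinite) (y : X) :
    solExp hW hLF y = star (entryExp hW hLF y) (C.exitSum E (solExp hW hLF) y) := by
  rw [solExp, exitSum, Finset.sum_attach (C.bodySuccs E y) fun q => act q.1 * solExp hW hLF q.2]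

/-- The equation of `y` in a solution `Φ`, after each loop-entry successor `z` of `y` has been
replaced by `loopExp y z * Φ y`. -/
def ReducedEqAt (hW : WellLayeredLabelling C E) (hLF : C.LocallyFinite) (Φ : X → SLExp Act)
    (y : X) : Prop :=
  Φ y = entryExp hW hLF y * Φ y + C.exitSum E Φ y

theorem sum_entrySuccs_eq_entryExp_mul (hW : WellLayeredLabelling C E) (hLF : C.LocallyFinite)
    {Φ : X → SLExp Act} {y : X}
    (h : ∀ q ∈ C.entrySuccs E y, Φ q.2 = loopExp hW hLF y q.2 * Φ y) :
    ∑ q ∈ C.entrySuccs E y, act q.1 * Φ q.2 = entryExp hW hLF y * Φ y := by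
  rw [entryExp, SLExp.sum_mul]
  exact Finset.sum_congr rfl fun q hq => by rw [h q hq, mul_assoc]

open Classical in
theorem eq_loopExp_mul (hW : WellLayeredLabelling C E) (hLF : C.LocallyFinite)
    {Φ : X → SLExp Act} {x : X} (hΦ : ∀ w, C.LoopsTo E x w → ReducedEqAt hW hLF Φ w)
    {y : X} (h : C.LoopsTo E x y) : Φ y = loopExp hW hLF x y * Φ x := by
  have hexit : C.exitSum E Φ y = (∑ q ∈ C.bodySuccs E y,
      if q.2 = x then act q.1 else act q.1 * loopExp hW hLF x q.2) * Φ x := by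
    rw [exitSum, hW.haltActs_eq_empty h, Finset.sum_empty, add_zero, SLExp.sum_mul]
    refine Finset.sum_congr rfl fun q hq => ?_
    split_ifs with hqx
    · rw [hqx]
    · rw [mul_assoc, eq_loopExp_mul hW hLF hΦ (h.tail (body_of_mem_bodySuccs hq) hqx)]
  rw [loopExp_eq hW hLF (hW.loopRank_lt hLF h), star_mul]
  exact eq_star_of_eq (hexit ▸ hΦ y h)
termination_by descendantCount (C.Body E) y
decreasing_by exact hW.bodyRank_lt hLF (body_of_mem_bodySuccs hq)

theorem reducedEqAt_solExp (hW : WellLayeredLabelling C E) (hLF : C.LocallyFinite) (y : X) :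
    ReducedEqAt hW hLF (solExp hW hLF) y :=
  (solExp_eq hW hLF y).trans ((star_unfold _ _).trans (by rw [← solExp_eq]))

theorem solves_of_reducedEqAt (hW : WellLayeredLabelling C E) (hLF : C.LocallyFinite)
    {Φ : X → SLExp Act} (hΦ : ∀ y, ReducedEqAt hW hLF Φ y) : C.Solves Φ :=
  (C.solves_iff_entry_add_exit E Φ).2 fun y => by
    rw [sum_entrySuccs_eq_entryExp_mul hW hLF fun q hq =>
      hW.eq_loopExp_mul hLF (fun w _ => hΦ w) (hW.loopsTo_of_mem_entrySuccs hq)]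
    exact hΦ y

theorem reducedEqAt_of_solves (hW : WellLayeredLabelling C E) (hLF : C.LocallyFinite)
    {Φ : X → SLExp Act} (hΦ : C.Solves Φ) (y : X) : ReducedEqAt hW hLF Φ y := by
  have hloop (q : Act × X) (hq : q ∈ C.entrySuccs E y) : Φ q.2 = loopExp hW hLF y q.2 * Φ y :=
    hW.eq_loopExp_mul hLF (fun w hw => reducedEqAt_of_solves hW hLF hΦ w)
      (hW.loopsTo_of_mem_entrySuccs hq)
  rw [ReducedEqAt, ← sum_entrySuccs_eq_entryExp_mul hW hLF hloop]
  exact (C.solves_iff_entry_add_exit E Φ).1 hΦ y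
termination_by descendantCount (C.LoopsTo E) y
decreasing_by exact hW.loopRank_lt hLF hw

theorem eq_solExp_of_reducedEqAt (hW : WellLayeredLabelling C E) (hLF : C.LocallyFinite)
    {Φ : X → SLExp Act} (hΦ : ∀ y, ReducedEqAt hW hLF Φ y) (y : X) :
    Φ y = solExp hW hLF y := by
  have hexit : C.exitSum E Φ y = C.exitSum E (solExp hW hLF) y := by
    rw [exitSum, exitSum]
    congr 1
    exact Finset.sum_congr rfl fun q hq => by rw [eq_solExp_of_reducedEqAt hW hLF hΦ q.2]
  rw [solExp_eq, ← hexit]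
  exact eq_star_of_eq (hΦ y)
termination_by descendantCount (C.Body E) y
decreasing_by exact hW.bodyRank_lt hLF (body_of_mem_bodySuccs hq)

theorem solves_iff_eq_solExp (hW : WellLayeredLabelling C E) (hLF : C.LocallyFinite)
    (Φ : X → SLExp Act) : C.Solves Φ ↔ Φ = solExp hW hLF :=
  ⟨fun h => funext (eq_solExp_of_reducedEqAt hW hLF (reducedEqAt_of_solves hW hLF h)),
    fun h => h ▸ solves_of_reducedEqAt hW hLF (reducedEqAt_solExp hW hLF)⟩

end WellLayeredLabelling

theorem well_layered_unique_solution_general {Act X : Type}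
    (C : Chart Act X) (hC : IsWellLayered C) :
    (∃ φ : X → StExp Act, IsSolution C φ) ∧
      (∀ φ ψ : X → StExp Act, IsSolution C φ → IsSolution C ψ → ∀ x, SLEq (φ x) (ψ x)) := by
  obtain ⟨⟨E, hW⟩, hLF⟩ := hC
  have hsol (φ : X → StExp Act) : IsSolution C φ ↔ mk ∘ φ = hW.solExp hLF :=
    (C.isSolution_iff_solves φ).trans (hW.solves_iff_eq_solExp hLF _)
  refine ⟨⟨Function.surjInv mk_surjective ∘ hW.solExp hLF, (hsol _).2 ?_⟩, ?_⟩
  · exact funext fun x => Function.surjInv_eq mk_surjective _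
  · intro φ ψ hφ hψ x
    exact mk_eq_mk.1 (congrFun (((hsol φ).1 hφ).trans ((hsol ψ).1 hψ).symm) x)

/-- Every well-layered chart admits a solution, and the solution is unique up to provable
equivalence. -/
theorem well_layered_unique_solution {Act X : Type} [DecidableEq Act]
    (C : Chart Act X) (hC : IsWellLayered C) :
    (∃ φ : X → StExp Act, IsSolution C φ) ∧
      (∀ φ ψ : X → StExp Act, IsSolution C φ → IsSolution C ψ → ∀ x, SLEq (φ x) (ψ x)) :=
  well_layered_unique_solution_general C hC
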